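/- Let b ∈ ℕ and let S be a semigroup that is both b-weakly left cancellative and b-weakly right cancellative, and let F be a net in P_f(S) satisfying condition (*). Then every central set in S is a D-set in S with respect to F. -/

import Mathlib

/-!
The ultrafilters all of whose members have positive upper Banach density form a two-sided
ideal `D*_F` of `βS`, which therefore contains `K(βS)`, in particular the idempotent witnessing
that `A` is central. `D*_F` is nonempty because density is monotone and subadditive with
`0 < uBD F univ`, so the sets of density zero form a proper ideal of sets, avoided by some
ultrafilter. It is a right ideal: if `C ∈ x * y`, then `{a | a⁻¹C ∈ y}` has positive density,
and the finitely many of its elements lying in one shifted piece `F_i s` are moved into `C` by a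
single right translation, which by weak right cancellation loses at most a factor `b`. It is a
left ideal: if `t⁻¹C` has positive density, weak left cancellation gives `|t B| ≥ |B| / b` for
`B = t⁻¹C ∩ F_i s`, and by (*) all but a small part of `t F_i` lies in a later piece `F_j s'`
of comparable size.
-/

open scoped Classical symmDiff

/-- The translate `F · s` of a finite piece `F` by an element of `S ∪ {1}`
(`none` meaning "no shift"). -/
def netShift {S : Type*} [Mul S] (F : Set S) : Option S → Set S
  | none => F
  | some t => (· * t) '' F

/-- Upper Banach density of `A ⊆ S` with respect to a net `F = ⟨F i⟩` of finite
nonempty subsets of `S`, indexed by a directed preorder `I`. -/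
noncomputable def uBD {S : Type*} [Mul S] {I : Type*} [Preorder I]
    (F : I → Set S) (A : Set S) : ℝ :=
  sSup {α : ℝ | ∀ i₀ : I, ∃ i, i₀ ≤ i ∧ ∃ s : Option S,
    α * ((F i).ncard : ℝ) ≤ ((A ∩ netShift (F i) s).ncard : ℝ)}

attribute [local instance] Ultrafilter.mul

open Set

theorem Set.ncard_le_mul_ncard_of_mapsTo {α β : Type*} {f : α → β} {s : Set α} {t : Set β}
    (hs : s.Finite) (ht : t.Finite) (hf : MapsTo f s t) (n : ℕ)
    (hn : ∀ b ∈ t, (s ∩ f ⁻¹' {b}).ncard ≤ n) : s.ncard ≤ n * t.ncard := by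
  lift s to Finset α using hs
  lift t to Finset β using ht
  simp only [ncard_coe_finset]
  refine Finset.card_le_mul_card_image_of_maps_to hf n fun b hb => ?_
  rw [← ncard_coe_finset, Finset.coe_filter]
  exact hn b hb

theorem Ultrafilter.exists_forall_mem_pos {α M : Type*} [AddCommMonoid M] [LinearOrder M]
    [IsOrderedAddMonoid M] (d : Set α → M) (hmono : Monotone d) (hempty : d ∅ ≤ 0)
    (hunion : ∀ s t, d (s ∪ t) ≤ d s + d t) (huniv : 0 < d univ) :
    ∃ U : Ultrafilter α, ∀ s ∈ U, 0 < d s := by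
  let f : Filter α := .comk (d · ≤ 0) hempty (fun t ht s hst => (hmono hst).trans ht)
    fun s hs t ht => (hunion s t).trans (add_nonpos hs ht)
  have : f.NeBot := ⟨fun h => huniv.not_ge (by simpa [f] using Filter.empty_mem_iff_bot.mpr h)⟩
  refine ⟨.of f, fun s hs => lt_of_not_ge fun hs0 => ?_⟩
  have : sᶜ ∈ f := by simpa [f] using hs0
  exact Ultrafilter.compl_notMem_iff.mpr hs (Ultrafilter.of_le f this)

section Cancel
variable (S : Type*) [Mul S] (b : ℕ)

def IsWeaklyLeftCancel : Prop :=
  ∀ t u : S, {s : S | t * s = u}.Finite ∧ {s : S | t * s = u}.ncard ≤ b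

def IsWeaklyRightCancel : Prop :=
  ∀ t u : S, {s : S | s * t = u}.Finite ∧ {s : S | s * t = u}.ncard ≤ b

variable {S b}

theorem IsWeaklyLeftCancel.ncard_inter_preimage_le (h : IsWeaklyLeftCancel S b) (t u : S)
    (s : Set S) : (s ∩ (t * ·) ⁻¹' {u}).ncard ≤ b :=
  (ncard_le_ncard inter_subset_right (h t u).1).trans (h t u).2

theorem IsWeaklyRightCancel.ncard_inter_preimage_le (h : IsWeaklyRightCancel S b) (t u : S)
    (s : Set S) : (s ∩ (· * t) ⁻¹' {u}).ncard ≤ b :=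
  (ncard_le_ncard inter_subset_right (h t u).1).trans (h t u).2

theorem IsWeaklyLeftCancel.pos [Nonempty S] (h : IsWeaklyLeftCancel S b) : 0 < b := by
  obtain ⟨t⟩ := ‹Nonempty S›
  exact (ncard_pos (h t (t * t)).1 |>.mpr ⟨t, rfl⟩).trans_le (h t (t * t)).2

theorem IsWeaklyRightCancel.pos [Nonempty S] (h : IsWeaklyRightCancel S b) : 0 < b := by
  obtain ⟨t⟩ := ‹Nonempty S›
  exact (ncard_pos (h t (t * t)).1 |>.mpr ⟨t, rfl⟩).trans_le (h t (t * t)).2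

end Cancel

section
variable {S : Type*} [Mul S]

theorem netShift_finite {G : Set S} (hG : G.Finite) (s : Option S) : (netShift G s).Finite := by
  cases s
  exacts [hG, hG.image _]

theorem ncard_netShift_le {G : Set S} (hG : G.Finite) (s : Option S) :
    (netShift G s).ncard ≤ G.ncard := by
  cases s
  exacts [le_rfl, ncard_image_le hG]

theorem ncard_netShift_sdiff_le {G : Set S} (hG : G.Finite) (Y : Set S) (s : Option S) :
    (netShift G s \ netShift Y s).ncard ≤ (G \ Y).ncard := by
  cases s with
  | none => exact le_rfl
  | some u =>
    have : (· * u) '' G \ (· * u) '' Y ⊆ (· * u) '' (G \ Y) := by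
      rw [sdiff_subset_iff, ← image_union, union_sdiff_self]
      exact image_mono subset_union_right
    exact (ncard_le_ncard this (hG.sdiff.image _)).trans (ncard_image_le hG.sdiff)

end

section
variable {S : Type*} [Semigroup S]

theorem exists_netShift_eq_netShift_netShift (G : Set S) (s u : Option S) :
    ∃ v, netShift (netShift G s) u = netShift G v := by
  cases s with
  | none => exact ⟨u, rfl⟩
  | some s =>
    cases u with
    | none => exact ⟨some s, rfl⟩
    | some u => exact ⟨some (s * u), by simp only [netShift, image_image, mul_assoc]⟩

theorem image_mul_left_netShift (t : S) (G : Set S) (s : Option S) :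
    (t * ·) '' netShift G s = netShift ((t * ·) '' G) s := by
  cases s
  · rfl
  · simp only [netShift, image_image, mul_assoc]

end

section Density
variable {S : Type*} {I : Type*} {F : I → Set S}

/-- `F` is a net in `𝒫_f(S)`, the finite nonempty subsets of `S`. -/
structure IsPfNet (F : I → Set S) : Prop where
  finite : ∀ i, (F i).Finite
  nonempty : ∀ i, (F i).Nonempty

theorem IsPfNet.ncard_pos (hF : IsPfNet F) (i : I) : (0 : ℝ) < (F i).ncard := by
  exact_mod_cast (Set.ncard_pos (hF.finite i)).mpr (hF.nonempty i)

variable [Mul S]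

theorem IsPfNet.ncard_inter_netShift_le (hF : IsPfNet F) (A : Set S) (i : I) (s : Option S) :
    (A ∩ netShift (F i) s).ncard ≤ (F i).ncard :=
  (ncard_le_ncard inter_subset_right (netShift_finite (hF.finite i) s)).trans
    (ncard_netShift_le (hF.finite i) s)

variable [Preorder I]

-- `uBD F A = sSup (uBDSet F A)` holds definitionally.
def uBDSet (F : I → Set S) (A : Set S) : Set ℝ :=
  {α : ℝ | ∀ i₀ : I, ∃ i, i₀ ≤ i ∧ ∃ s : Option S,
    α * ((F i).ncard : ℝ) ≤ ((A ∩ netShift (F i) s).ncard : ℝ)}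

theorem zero_mem_uBDSet (F : I → Set S) (A : Set S) : (0 : ℝ) ∈ uBDSet F A :=
  fun i₀ => ⟨i₀, le_rfl, none, by rw [zero_mul]; positivity⟩

namespace IsPfNet

theorem le_of_mem_uBDSet (hF : IsPfNet F) {A : Set S} {α γ : ℝ} (hα : α ∈ uBDSet F A) (i₀ : I)
    (h : ∀ i, i₀ ≤ i → ∀ s, ((A ∩ netShift (F i) s).ncard : ℝ) ≤ γ * (F i).ncard) : α ≤ γ := by
  obtain ⟨i, hi, s, hαi⟩ := hα i₀
  exact le_of_mul_le_mul_right (hαi.trans (h i hi s)) (hF.ncard_pos i)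

variable [Nonempty I]

theorem bddAbove_uBDSet (hF : IsPfNet F) (A : Set S) : BddAbove (uBDSet F A) :=
  ⟨1, fun _ hα => hF.le_of_mem_uBDSet hα (Classical.arbitrary I) fun i _ s => by
    rw [one_mul]
    exact_mod_cast hF.ncard_inter_netShift_le A i s⟩

theorem uBD_pos_iff (hF : IsPfNet F) {A : Set S} :
    0 < uBD F A ↔ ∃ α, 0 < α ∧ α ∈ uBDSet F A := by
  refine ⟨fun h => ?_, fun ⟨α, hα0, hα⟩ => hα0.trans_le (le_csSup (hF.bddAbove_uBDSet A) hα)⟩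
  obtain ⟨α, hα, hα0⟩ := exists_lt_of_lt_csSup ⟨0, zero_mem_uBDSet F A⟩ h
  exact ⟨α, hα0, hα⟩

theorem eventually_ncard_inter_le_of_uBD_lt (hF : IsPfNet F) {A : Set S} {γ : ℝ}
    (h : uBD F A < γ) :
    ∃ i₀, ∀ i, i₀ ≤ i → ∀ s, ((A ∩ netShift (F i) s).ncard : ℝ) ≤ γ * (F i).ncard := by
  have hγ : γ ∉ uBDSet F A := fun hγ => h.not_ge (le_csSup (hF.bddAbove_uBDSet A) hγ)
  simp only [uBDSet, mem_ofPred_eq, not_forall, not_exists, not_and, not_le] at hγ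
  obtain ⟨i₀, hi₀⟩ := hγ
  exact ⟨i₀, fun i hi s => (hi₀ i hi s).le⟩

theorem uBD_mono (hF : IsPfNet F) : Monotone (uBD F) := fun A B hAB =>
  csSup_le_csSup (hF.bddAbove_uBDSet B) ⟨0, zero_mem_uBDSet F A⟩ fun α hα i₀ => by
    obtain ⟨i, hi, s, hαi⟩ := hα i₀
    refine ⟨i, hi, s, hαi.trans ?_⟩
    exact_mod_cast ncard_le_ncard (inter_subset_inter_left _ hAB)
      ((netShift_finite (hF.finite i) s).subset inter_subset_right)

theorem uBD_empty_nonpos (hF : IsPfNet F) : uBD F ∅ ≤ 0 :=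
  csSup_le ⟨0, zero_mem_uBDSet F ∅⟩ fun _ hα =>
    hF.le_of_mem_uBDSet hα (Classical.arbitrary I) fun _ _ _ => by simp

theorem uBD_univ_pos (hF : IsPfNet F) : 0 < uBD F univ :=
  hF.uBD_pos_iff.mpr ⟨1, one_pos, fun i₀ => ⟨i₀, le_rfl, none, by simp [netShift]⟩⟩

theorem uBD_union_le [IsDirectedOrder I] (hF : IsPfNet F) (A B : Set S) :
    uBD F (A ∪ B) ≤ uBD F A + uBD F B := by
  refine csSup_le ⟨0, zero_mem_uBDSet F _⟩ fun α hα => le_of_forall_pos_le_add fun ε hε => ?_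
  obtain ⟨iA, hA⟩ := hF.eventually_ncard_inter_le_of_uBD_lt (lt_add_of_pos_right (uBD F A)
    (half_pos hε))
  obtain ⟨iB, hB⟩ := hF.eventually_ncard_inter_le_of_uBD_lt (lt_add_of_pos_right (uBD F B)
    (half_pos hε))
  obtain ⟨i₀, hiA, hiB⟩ := exists_ge_ge iA iB
  have := hF.le_of_mem_uBDSet (γ := uBD F A + uBD F B + ε) hα i₀ fun i hi s => calc
    (((A ∪ B) ∩ netShift (F i) s).ncard : ℝ)
        ≤ (A ∩ netShift (F i) s).ncard + (B ∩ netShift (F i) s).ncard := by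
      rw [union_inter_distrib_right]
      exact_mod_cast ncard_union_le _ _
    _ ≤ (uBD F A + ε / 2) * (F i).ncard + (uBD F B + ε / 2) * (F i).ncard :=
      add_le_add (hA i (hiA.trans hi) s) (hB i (hiB.trans hi) s)
    _ = _ := by ring
  linarith

end IsPfNet
end Density

section Transfer
variable {S : Type*} [Semigroup S] {I : Type*} [Preorder I] {F : I → Set S} {b : ℕ}

def StarCondition (F : I → Set S) : Prop :=
  ∀ ε : ℝ, 0 < ε → ∀ t : S, ∃ c : ℕ, ∃ l : I, ∀ i₀, l ≤ i₀ → ∃ i, i₀ ≤ i ∧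
    ∃ s : Option S,
      ((((t * ·) '' F i₀) \ netShift (F i) s).ncard : ℝ) < ε * (F i₀).ncard ∧
      ((F i).ncard : ℝ) ≤ c * (F i₀).ncard

theorem IsWeaklyLeftCancel.ncard_preimage_mul_left_inter_netShift_le
    (hlc : IsWeaklyLeftCancel S b) (t : S) (C : Set S) {G Y : Set S} (hG : G.Finite) (hY : Y.Finite) (s : Option S) :
    ({a | t * a ∈ C} ∩ netShift G s).ncard ≤
      b * ((C ∩ netShift Y s).ncard + ((t * ·) '' G \ Y).ncard) := by
  set B := {a | t * a ∈ C} ∩ netShift G s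
  have hB : B.Finite := (netShift_finite hG s).subset inter_subset_right
  have hX := (netShift_finite hY s).subset (inter_subset_right (s := C))
  have hD := (netShift_finite (hG.image (t * ·)) s).sdiff (t := netShift Y s)
  have hmaps : MapsTo (t * ·) B
      (C ∩ netShift Y s ∪ netShift ((t * ·) '' G) s \ netShift Y s) := by
    intro a ⟨haC, haG⟩
    have : t * a ∈ netShift ((t * ·) '' G) s :=
      image_mul_left_netShift t G s ▸ mem_image_of_mem _ haG
    by_cases h : t * a ∈ netShift Y s
    exacts [Or.inl ⟨haC, h⟩, Or.inr ⟨this, h⟩]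
  calc B.ncard ≤ b * (C ∩ netShift Y s ∪ netShift ((t * ·) '' G) s \ netShift Y s).ncard :=
        ncard_le_mul_ncard_of_mapsTo hB (hX.union hD) hmaps b fun u _ =>
          hlc.ncard_inter_preimage_le t u B
    _ ≤ _ := Nat.mul_le_mul_left b <| (ncard_union_le _ _).trans <|
        Nat.add_le_add_left (ncard_netShift_sdiff_le (hG.image _) _ s) _

namespace IsPfNet

theorem div_mem_uBDSet_of_eventually_mul_mem (hF : IsPfNet F) (hrc : IsWeaklyRightCancel S b)
    (y : Filter S) [y.NeBot] {C : Set S} {α : ℝ}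
    (hα : α ∈ uBDSet F {a | ∀ᶠ w in y, a * w ∈ C}) : α / b ∈ uBDSet F C := by
  intro i₀
  obtain ⟨i, hi, s, hαi⟩ := hα i₀
  set T := {a | ∀ᶠ w in y, a * w ∈ C} ∩ netShift (F i) s
  have hT : T.Finite := (netShift_finite (hF.finite i) s).subset inter_subset_right
  -- one right translation `w` serves all the finitely many elements of `T`
  obtain ⟨w, hw⟩ := (hT.eventually_all.mpr fun a ha => ha.1).exists
  obtain ⟨v, hv⟩ := exists_netShift_eq_netShift_netShift (F i) s (some w)
  refine ⟨i, hi, v, ?_⟩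
  rw [div_mul_eq_mul_div, ← hv]
  refine div_le_of_le_mul₀ b.cast_nonneg (Nat.cast_nonneg _) (hαi.trans ?_)
  have hmaps : MapsTo (· * w) T (C ∩ netShift (netShift (F i) s) (some w)) :=
    fun a ha => ⟨hw a ha, mem_image_of_mem _ ha.2⟩
  rw [mul_comm]
  exact_mod_cast ncard_le_mul_ncard_of_mapsTo hT
    ((netShift_finite (netShift_finite (hF.finite i) s) _).subset inter_subset_right) hmaps b
    fun u _ => hrc.ncard_inter_preimage_le w u T

theorem exists_pos_mem_uBDSet_of_mul_left [IsDirectedOrder I] (hF : IsPfNet F)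
    (hlc : IsWeaklyLeftCancel S b) (hstar : StarCondition F) {t : S} {C : Set S} {α : ℝ}
    (hα0 : 0 < α) (hα : α ∈ uBDSet F {a | t * a ∈ C}) : ∃ β, 0 < β ∧ β ∈ uBDSet F C := by
  have : Nonempty S := ⟨t⟩
  have hb : (0 : ℝ) < b := by exact_mod_cast hlc.pos
  obtain ⟨c, l, hl⟩ := hstar (α / (2 * b)) (by positivity) t
  have hc : (0 : ℝ) < c := by
    obtain ⟨i, -, -, -, hi⟩ := hl l le_rfl
    exact pos_of_mul_pos_left ((hF.ncard_pos i).trans_le hi) (Nat.cast_nonneg _)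
  refine ⟨α / (2 * b * c), by positivity, fun j₀ => ?_⟩
  obtain ⟨i₀, hj₀, hl₀⟩ := exists_ge_ge j₀ l
  obtain ⟨i, hi, s, hαi⟩ := hα i₀
  obtain ⟨j, hij, s', hsmall, hcard⟩ := hl i (hl₀.trans hi)
  obtain ⟨v, hv⟩ := exists_netShift_eq_netShift_netShift (F j) s' s
  refine ⟨j, hj₀.trans (hi.trans hij), v, ?_⟩
  rw [← hv]
  have hcount := hlc.ncard_preimage_mul_left_inter_netShift_le t C (hF.finite i)
    (netShift_finite (hF.finite j) s') s
  set X := (C ∩ netShift (netShift (F j) s') s).ncard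
  set D := (((t * ·) '' F i) \ netShift (F j) s').ncard
  replace hcount : α * (F i).ncard ≤ b * (X + D) := hαi.trans (by exact_mod_cast hcount)
  -- `ε = α / (2b)` makes the part of `t F_i` missed by `F_j s'` cost at most half of `α |F_i|`
  have hD : b * D ≤ α / 2 * (F i).ncard := calc
    b * D ≤ b * (α / (2 * b) * (F i).ncard) := mul_le_mul_of_nonneg_left hsmall.le hb.le
    _ = α / 2 * (F i).ncard := by field_simp
  calc α / (2 * b * c) * (F j).ncard ≤ α / (2 * b * c) * (c * (F i).ncard) :=
        mul_le_mul_of_nonneg_left hcard (by positivity)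
    _ = α / 2 * (F i).ncard / b := by field_simp
    _ ≤ X := div_le_of_le_mul₀ hb.le (Nat.cast_nonneg _) (by linarith)

end IsPfNet

/-- The set `D*_F`. -/
def posDensityUltrafilters (F : I → Set S) : Set (Ultrafilter S) :=
  {p | ∀ C ∈ p, 0 < uBD F C}

variable [Nonempty I]

theorem IsPfNet.posDensityUltrafilters_nonempty [IsDirectedOrder I] (hF : IsPfNet F) :
    (posDensityUltrafilters F).Nonempty :=
  Ultrafilter.exists_forall_mem_pos _ hF.uBD_mono hF.uBD_empty_nonpos hF.uBD_union_le
    hF.uBD_univ_pos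

theorem IsPfNet.mul_mem_posDensityUltrafilters_of_left (hF : IsPfNet F)
    (hrc : IsWeaklyRightCancel S b) {x : Ultrafilter S} (hx : x ∈ posDensityUltrafilters F)
    (y : Ultrafilter S) : x * y ∈ posDensityUltrafilters F := by
  intro C hC
  obtain ⟨α, hα0, hα⟩ := hF.uBD_pos_iff.mp (hx _ ((Ultrafilter.eventually_mul x y (· ∈ C)).mp hC))
  have : Nonempty S := Filter.nonempty_of_neBot (y : Filter S)
  have := hrc.pos
  exact hF.uBD_pos_iff.mpr ⟨α / b, by positivity, hF.div_mem_uBDSet_of_eventually_mul_mem hrc y hα⟩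

theorem IsPfNet.mul_mem_posDensityUltrafilters_of_right [IsDirectedOrder I] (hF : IsPfNet F)
    (hlc : IsWeaklyLeftCancel S b) (hstar : StarCondition F) {x : Ultrafilter S}
    (hx : x ∈ posDensityUltrafilters F) (y : Ultrafilter S) :
    y * x ∈ posDensityUltrafilters F := by
  intro C hC
  obtain ⟨t, ht⟩ := ((Ultrafilter.eventually_mul y x (· ∈ C)).mp hC).exists
  obtain ⟨α, hα0, hα⟩ := hF.uBD_pos_iff.mp (hx _ ht)
  exact hF.uBD_pos_iff.mpr (hF.exists_pos_mem_uBDSet_of_mul_left hlc hstar hα0 hα)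

end Transfer

theorem central_is_DSet {S : Type*} [Semigroup S] (b : ℕ)
    (hlc : ∀ t u : S, {s : S | t * s = u}.Finite ∧ {s : S | t * s = u}.ncard ≤ b)
    (hrc : ∀ t u : S, {s : S | s * t = u}.Finite ∧ {s : S | s * t = u}.ncard ≤ b)
    {I : Type*} [Preorder I] [Nonempty I] (F : I → Set S)
    (hfin : ∀ i, (F i).Finite) (hne : ∀ i, (F i).Nonempty)
    (hdir : ∀ i j : I, ∃ k, i ≤ k ∧ j ≤ k)
    (hstar : ∀ ε : ℝ, 0 < ε → ∀ t : S, ∃ c : ℕ, ∃ l : I, ∀ i₀, l ≤ i₀ → ∃ i, i₀ ≤ i ∧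
      ∃ s : Option S,
        ((((t * ·) '' F i₀) \ netShift (F i) s).ncard : ℝ) < ε * (F i₀).ncard ∧
        ((F i).ncard : ℝ) ≤ c * (F i₀).ncard)
    (A : Set S)
    (hcentral : ∃ p : Ultrafilter S, p * p = p ∧ A ∈ p ∧
      ∀ C : Set (Ultrafilter S), C.Nonempty →
        (∀ x ∈ C, ∀ y : Ultrafilter S, x * y ∈ C ∧ y * x ∈ C) → p ∈ C) :
    ∃ p : Ultrafilter S, p * p = p ∧ (∀ C ∈ p, 0 < uBD F C) ∧ A ∈ p := by
  obtain ⟨p, hpp, hpA, hpmin⟩ := hcentral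
  have hF : IsPfNet F := ⟨hfin, hne⟩
  have : IsDirectedOrder I := ⟨hdir⟩
  refine ⟨p, hpp, hpmin _ hF.posDensityUltrafilters_nonempty fun x hx y => ⟨?_, ?_⟩, hpA⟩
  exacts [hF.mul_mem_posDensityUltrafilters_of_left hrc hx y,
    hF.mul_mem_posDensityUltrafilters_of_right hlc hstar hx y]
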